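/- Let Δ ⊆ [n] be a set of positive integers with 1 ∈ Δ, and Γ_3 = Δ ∩ [4,n]. With d(Δ,t) defined as in the context, for all t ≥ 1 we have d(Δ,t) ≤ d(Γ_3, t) + 1. -/

import Mathlib

/-- Group a sorted list of naturals into maximal runs of consecutive integers
(the maximal block decomposition). -/
def runs : List ℕ → List (List ℕ)
  | [] => []
  | x :: xs =>
    match runs xs with
    | (y :: ys) :: rest => if x + 1 = y then (x :: y :: ys) :: rest else [x] :: (y :: ys) :: rest
    | l => [x] :: l

/-- For each maximal block, record (min, max, cardinality mod 3). -/
def blockData (l : List ℕ) : List (ℕ × ℕ × ℕ) :=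
  (runs l).map (fun b => (b.headI, (b.getLast?).getD 0, b.length % 3))

/-- Fold over the list of blocks, grouping consecutive gluable type-1/type-2 blocks into
maximal extended blocks; the state `(t, s)` counts type-1/type-2 blocks of the current
extended block and `prev` records the max of the previous block if it can be glued onto.
Each finished extended block with `t` type-1 and `s` type-2 blocks contributes
`t % 2` to `a` and `s + (t - t % 2) / 2` to `b`; the result is `(a, b)`. -/
def go : List (ℕ × ℕ × ℕ) → ℕ → ℕ → Option ℕ → ℕ × ℕ
  | [], t, s, _ => (t % 2, s + (t - t % 2) / 2)
  | (m, mx, ty) :: rest, t, s, prev =>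
    if ty = 0 then
      let r := go rest 0 0 none
      (r.1 + t % 2, r.2 + s + (t - t % 2) / 2)
    else if prev = some (m - 2) ∧ 2 ≤ m then
      go rest (t + if ty = 1 then 1 else 0) (s + if ty = 2 then 1 else 0) (some mx)
    else
      let r := go rest (if ty = 1 then 1 else 0) (if ty = 2 then 1 else 0) (some mx)
      (r.1 + t % 2, r.2 + s + (t - t % 2) / 2)

/-- The invariant `a(Δ)`. -/
def aF (Δ : Finset ℕ) : ℕ := (go (blockData (Δ.sort (· ≤ ·))) 0 0 none).1

/-- The invariant `b(Δ)`. -/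
def bF (Δ : Finset ℕ) : ℕ := (go (blockData (Δ.sort (· ≤ ·))) 0 0 none).2

/-- The invariant `c(Δ) = (|Δ| - a(Δ) - 2 b(Δ)) / 3`. -/
def cF (Δ : Finset ℕ) : ℕ := (Δ.card - aF Δ - 2 * bF Δ) / 3

/-- The invariant `k(Δ) = a(Δ) + b(Δ) + c(Δ)`. -/
def kF (Δ : Finset ℕ) : ℕ := aF Δ + bF Δ + cF Δ

/-- The piecewise function `d(Δ, t)` of the paper. -/
def dF (Δ : Finset ℕ) (t : ℕ) : ℕ :=
  if t ≤ aF Δ then kF Δ + 2 - t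
  else if t ≤ aF Δ + 2 * bF Δ then kF Δ + 1 - (t + aF Δ - 1) / 2
  else if t ≤ Δ.card then kF Δ + 1 - (t + 2 * aF Δ + bF Δ - 1) / 3
  else 1

/-!
Write the sorted list of `Δ` as `P ++ L`, where `L` lists `Γ₃ = Δ ∩ [4, n]` and
`P ∈ {[1], [1,2], [1,3], [1,2,3]}`. Only the blocks meeting `{1, 2, 3}` differ, and inspecting
how they glue shows that `(a, b, c)` changes by `(1,0,0)`, `(0,1,0)`, `(1,-1,1)` or `(0,0,1)`.
The delicate case is `P = [1,3]` with `4 ∈ Δ`: the block starting at `3` is one longer than the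
block of `Γ₃` starting at `4`, and it glues onto `{1}`. In every case `k` grows by exactly one,
and comparing the piecewise formulas regime by regime gives `d(Δ,t) ≤ d(Γ₃,t) + 1`.
-/

open Finset

theorem exists_runs_cons (x : ℕ) (xs : List ℕ) : ∃ u r, runs (x :: xs) = (x :: u) :: r := by
  rw [runs]
  rcases runs xs with _ | ⟨_ | ⟨y, ys⟩, rest⟩
  · exact ⟨[], [], rfl⟩
  · exact ⟨[], _, rfl⟩
  · by_cases h : x + 1 = y
    · exact ⟨y :: ys, rest, by simp [h]⟩
    · exact ⟨[], (y :: ys) :: rest, by simp [h]⟩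

theorem runs_cons_of_head?_ne {x : ℕ} {xs : List ℕ} (h : xs.head? ≠ some (x + 1)) :
    runs (x :: xs) = [x] :: runs xs := by
  cases xs with
  | nil => rfl
  | cons y ys =>
    obtain ⟨u, r, hr⟩ := exists_runs_cons y ys
    rw [runs, hr]
    simp_all [eq_comm]

theorem runs_cons_of_runs_eq {x : ℕ} {xs u : List ℕ} {r : List (List ℕ)}
    (h : runs xs = ((x + 1) :: u) :: r) : runs (x :: xs) = (x :: (x + 1) :: u) :: r := by
  rw [runs, h]
  simp

theorem flatten_runs : ∀ l : List ℕ, (runs l).flatten = l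
  | [] => rfl
  | x :: xs => by
    have ih := flatten_runs xs
    rw [runs]
    rcases hr : runs xs with _ | ⟨_ | ⟨y, ys⟩, rest⟩
    · simp_all
    · simp_all
    · by_cases h : x + 1 = y <;> simp_all

theorem exists_blockData_cons (x : ℕ) (xs : List ℕ) :
    ∃ M r rest, r < 3 ∧ blockData (x :: xs) = (x, M, r) :: rest := by
  obtain ⟨u, r, hr⟩ := exists_runs_cons x xs
  exact ⟨_, _, _, Nat.mod_lt _ (by norm_num), by rw [blockData, hr, List.map_cons]; rfl⟩

theorem blockData_cons_of_head?_ne {x : ℕ} {xs : List ℕ} (h : xs.head? ≠ some (x + 1)) :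
    blockData (x :: xs) = (x, x, 1) :: blockData xs := by
  rw [blockData, runs_cons_of_head?_ne h]
  rfl

theorem blockData_cons_succ {x M r : ℕ} {xs : List ℕ} {rest : List (ℕ × ℕ × ℕ)}
    (h : blockData ((x + 1) :: xs) = (x + 1, M, r) :: rest) :
    blockData (x :: (x + 1) :: xs) = (x, M, (r + 1) % 3) :: rest := by
  obtain ⟨u, R, hR⟩ := exists_runs_cons (x + 1) xs
  rw [blockData, hR, List.map_cons, List.cons.injEq] at h
  obtain ⟨hhead, rfl⟩ := h
  simp only [Prod.mk.injEq] at hhead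
  obtain ⟨-, rfl, rfl⟩ := hhead
  rw [blockData, runs_cons_of_runs_eq hR, List.map_cons]
  simp [List.getLast?_cons_cons]

theorem go_zero_zero (l : List (ℕ × ℕ × ℕ)) (p : Option ℕ) : go l 0 0 p = go l 0 0 none := by
  rcases l with _ | ⟨⟨m, mx, ty⟩, rest⟩
  · rfl
  · by_cases hg : p = some (m - 2) ∧ 2 ≤ m <;> simp [go, hg]

theorem go_add_two : ∀ (l : List (ℕ × ℕ × ℕ)) (t s : ℕ) (p : Option ℕ),
    go l (t + 2) s p = go l t s p + (0, 1)
  | [], t, s, p => by simp only [go, Prod.ext_iff, Prod.fst_add, Prod.snd_add]; omega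
  | (m, mx, ty) :: rest, t, s, p => by
    by_cases h0 : ty = 0
    · simp only [go, if_pos h0, Prod.ext_iff, Prod.fst_add, Prod.snd_add]; omega
    by_cases hg : p = some (m - 2) ∧ 2 ≤ m
    · simp only [go, if_neg h0, if_pos hg, Nat.add_right_comm t 2, go_add_two rest]
    · simp only [go, if_neg h0, if_neg hg, Prod.ext_iff, Prod.fst_add, Prod.snd_add]; omega

theorem go_succ_right : ∀ (l : List (ℕ × ℕ × ℕ)) (t s : ℕ) (p : Option ℕ),
    go l t (s + 1) p = go l t s p + (0, 1)
  | [], t, s, p => by simp only [go, Prod.ext_iff, Prod.fst_add, Prod.snd_add]; omega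
  | (m, mx, ty) :: rest, t, s, p => by
    by_cases h0 : ty = 0
    · simp only [go, if_pos h0, Prod.ext_iff, Prod.fst_add, Prod.snd_add]; omega
    by_cases hg : p = some (m - 2) ∧ 2 ≤ m
    · simp only [go, if_neg h0, if_pos hg, Nat.add_right_comm s 1, go_succ_right rest]
    · simp only [go, if_neg h0, if_neg hg, Prod.ext_iff, Prod.fst_add, Prod.snd_add]; omega

theorem go_one_zero_of_head_not_glue {l : List (ℕ × ℕ × ℕ)} {p : Option ℕ}
    (h : ∀ e ∈ l.head?, ¬(p = some (e.1 - 2) ∧ 2 ≤ e.1)) :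
    go l 1 0 p = go l 0 0 none + (1, 0) := by
  rcases l with _ | ⟨⟨m, mx, ty⟩, rest⟩
  · rfl
  · have hg := h _ rfl
    by_cases h0 : ty = 0 <;> simp [go, h0, hg, Prod.ext_iff]

theorem go_fst_add_two_mul_snd : ∀ (l : List (ℕ × ℕ × ℕ)) (t s : ℕ) (p : Option ℕ),
    (∀ e ∈ l, e.2.2 < 3) →
    (go l t s p).1 + 2 * (go l t s p).2 = t + 2 * s + (l.map (·.2.2)).sum
  | [], t, s, p, _ => by simp only [go, List.map_nil, List.sum_nil]; omega
  | (m, mx, ty) :: rest, t, s, p, h => by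
    have hty : ty < 3 := h _ List.mem_cons_self
    have ih := fun t s p =>
      go_fst_add_two_mul_snd rest t s p fun e he => h e (List.mem_cons_of_mem _ he)
    simp only [List.map_cons, List.sum_cons]
    by_cases h0 : ty = 0
    · have := ih 0 0 none
      simp only [go, if_pos h0]; omega
    by_cases hg : p = some (m - 2) ∧ 2 ≤ m
    · have := ih (t + if ty = 1 then 1 else 0) (s + if ty = 2 then 1 else 0) (some mx)
      simp only [go, if_neg h0, if_pos hg]
      split_ifs at this ⊢ <;> omega
    · have := ih (if ty = 1 then 1 else 0) (if ty = 2 then 1 else 0) (some mx)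
      simp only [go, if_neg h0, if_neg hg]
      split_ifs at this ⊢ <;> omega

theorem card_eq_aF_add_two_mul_bF_add (S : Finset ℕ) :
    #S = aF S + 2 * bF S + 3 * ((runs (S.sort (· ≤ ·))).map (·.length / 3)).sum := by
  have hty : ∀ e ∈ blockData (S.sort (· ≤ ·)), e.2.2 < 3 := by
    simp only [blockData, List.mem_map]
    rintro _ ⟨b, -, rfl⟩
    exact Nat.mod_lt _ (by norm_num)
  have hab : aF S + 2 * bF S = ((runs (S.sort (· ≤ ·))).map (·.length % 3)).sum := by
    rw [aF, bF, go_fst_add_two_mul_snd _ 0 0 none hty, blockData, List.map_map]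
    simp only [zero_add, mul_zero]
    rfl
  rw [hab, ← List.sum_map_mul_left, ← List.sum_map_add]
  simp only [Nat.mod_add_div]
  rw [← List.length_flatten, flatten_runs, length_sort]

/-- `(a(Δ), b(Δ))` computed from the sorted list of elements of `Δ`. -/
def blockInvariants (l : List ℕ) : ℕ × ℕ := go (blockData l) 0 0 none

theorem blockInvariants_sort (S : Finset ℕ) :
    blockInvariants (S.sort (· ≤ ·)) = (aF S, bF S) := rfl

/-- `Δ` has one more unit of `a`, of `b` or of `c` than `Γ`, or trades a unit of `b` for one of
`a` and one of `c`; in each case `k` grows by one. -/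
def IsKStep (Δ Γ : Finset ℕ) : Prop :=
  ((aF Δ, bF Δ) = (aF Γ, bF Γ) + (1, 0) ∧ #Δ = #Γ + 1) ∨
    ((aF Δ, bF Δ) = (aF Γ, bF Γ) + (0, 1) ∧ #Δ = #Γ + 2) ∨
    ((aF Δ, bF Δ) + (0, 1) = (aF Γ, bF Γ) + (1, 0) ∧ #Δ = #Γ + 2) ∨
    ((aF Δ, bF Δ) = (aF Γ, bF Γ) ∧ #Δ = #Γ + 3)

theorem IsKStep.dF_le {Δ Γ : Finset ℕ} (h : IsKStep Δ Γ) {t : ℕ} (ht : 1 ≤ t) :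
    dF Δ t ≤ dF Γ t + 1 := by
  have hΓ := card_eq_aF_add_two_mul_bF_add Γ
  simp only [IsKStep, Prod.mk_add_mk, Prod.mk.injEq] at h
  simp only [dF, kF, cF]
  split_ifs <;> omega

section Prefix

variable {L : List ℕ} (hL : ∀ y ∈ L.head?, 4 ≤ y)
include hL

theorem blockData_cons_of_le_two {x : ℕ} (hx : x ≤ 2) :
    blockData (x :: L) = (x, x, 1) :: blockData L :=
  blockData_cons_of_head?_ne fun h => by have := hL _ h; omega

theorem blockInvariants_one_cons : blockInvariants (1 :: L) = blockInvariants L + (1, 0) := by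
  have hglue : ∀ e ∈ (blockData L).head?, ¬(some 1 = some (e.1 - 2) ∧ 2 ≤ e.1) := by
    rcases L with _ | ⟨y, L⟩
    · simp [blockData, runs]
    · obtain ⟨M, r, rest, -, hy⟩ := exists_blockData_cons y L
      have := hL y rfl
      simp only [hy, List.head?_cons, Option.mem_def, Option.some.injEq, forall_eq']
      omega
  rw [blockInvariants, blockInvariants, blockData_cons_of_le_two hL (by norm_num)]
  simpa [go] using go_one_zero_of_head_not_glue hglue

theorem blockInvariants_one_two_cons :
    blockInvariants (1 :: 2 :: L) = blockInvariants L + (0, 1) := by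
  have h2 : blockData (1 :: 2 :: L) = (1, 2, 2) :: blockData L :=
    blockData_cons_succ (blockData_cons_of_le_two hL (by norm_num))
  rw [blockInvariants, blockInvariants, h2]
  simp [go, go_succ_right, go_zero_zero, Prod.ext_iff]

theorem blockInvariants_one_three_cons :
    blockInvariants (1 :: 3 :: L) = blockInvariants L + (0, 1) ∨
      blockInvariants (1 :: 3 :: L) + (0, 1) = blockInvariants L + (1, 0) := by
  by_cases h4 : L.head? = some 4
  · obtain ⟨L, rfl⟩ : ∃ L', L = 4 :: L' := by
      rcases L with _ | ⟨y, L⟩ <;> simp_all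
    obtain ⟨M, r, rest, hr, h⟩ := exists_blockData_cons 4 L
    have h3 : blockData (1 :: 3 :: 4 :: L) = (1, 1, 1) :: (3, M, (r + 1) % 3) :: rest := by
      rw [blockData_cons_of_head?_ne (by simp), blockData_cons_succ h]
    simp only [blockInvariants, h3, h]
    interval_cases r <;> simp [go, go_add_two, go_succ_right, go_zero_zero, Prod.ext_iff]
  · have h3 : blockData (1 :: 3 :: L) = (1, 1, 1) :: (3, 3, 1) :: blockData L := by
      rw [blockData_cons_of_head?_ne (by simp), blockData_cons_of_head?_ne h4]
    left
    simp [blockInvariants, h3, go, go_add_two, go_zero_zero, Prod.ext_iff]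

theorem blockInvariants_one_two_three_cons :
    blockInvariants (1 :: 2 :: 3 :: L) = blockInvariants L := by
  by_cases h4 : L.head? = some 4
  · obtain ⟨L, rfl⟩ : ∃ L', L = 4 :: L' := by
      rcases L with _ | ⟨y, L⟩ <;> simp_all
    obtain ⟨M, r, rest, hr, h⟩ := exists_blockData_cons 4 L
    have h1 : blockData (1 :: 2 :: 3 :: 4 :: L) = (1, M, r) :: rest := by
      rw [blockData_cons_succ (blockData_cons_succ (blockData_cons_succ h))]
      congr 3
      omega
    simp only [blockInvariants, h1, h]
    by_cases h0 : r = 0 <;> simp [go, h0]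
  · have h1 : blockData (1 :: 2 :: 3 :: L) = (1, 3, 0) :: blockData L :=
      blockData_cons_succ (blockData_cons_succ (blockData_cons_of_head?_ne h4))
    simp [blockInvariants, h1, go]

end Prefix

theorem sort_eq_append_sort {α : Type*} [LinearOrder α] {Δ Γ : Finset α} {P : List α}
    (hP : P.Pairwise (· < ·)) (hlt : ∀ x ∈ P, ∀ y ∈ Γ, x < y) (hΔ : ∀ x, x ∈ Δ ↔ x ∈ P ∨ x ∈ Γ) :
    Δ.sort (· ≤ ·) = P ++ Γ.sort (· ≤ ·) := by
  have hl : (P ++ Γ.sort (· ≤ ·)).Pairwise (· < ·) :=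
    List.pairwise_append.2 ⟨hP, (sortedLT_sort Γ).pairwise,
      fun x hx y hy => hlt x hx y ((mem_sort _).1 hy)⟩
  have hΔ' : Δ = (P ++ Γ.sort (· ≤ ·)).toFinset := by
    ext x
    simp [hΔ]
  rw [hΔ']
  exact (List.toFinset_sort _ hl.nodup).2 (hl.imp le_of_lt)

theorem isKStep_of_sort_eq_append {Δ Γ : Finset ℕ} {P : List ℕ}
    (hP : P = [1] ∨ P = [1, 2] ∨ P = [1, 3] ∨ P = [1, 2, 3])
    (hsort : Δ.sort (· ≤ ·) = P ++ Γ.sort (· ≤ ·)) (hΓ : ∀ x ∈ Γ, 4 ≤ x) : IsKStep Δ Γ := by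
  have hL : ∀ y ∈ (Γ.sort (· ≤ ·)).head?, 4 ≤ y :=
    fun y hy => hΓ y ((mem_sort _).1 (List.mem_of_mem_head? hy))
  have hcard : #Δ = #Γ + P.length := by
    rw [← length_sort (· ≤ ·), hsort, List.length_append, length_sort, add_comm]
  unfold IsKStep
  rw [← blockInvariants_sort Δ, ← blockInvariants_sort Γ, hsort]
  rcases hP with rfl | rfl | rfl | rfl
  · exact Or.inl ⟨blockInvariants_one_cons hL, hcard⟩
  · exact Or.inr (Or.inl ⟨blockInvariants_one_two_cons hL, hcard⟩)
  · rcases blockInvariants_one_three_cons hL with h | h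
    · exact Or.inr (Or.inl ⟨h, hcard⟩)
    · exact Or.inr (Or.inr (Or.inl ⟨h, hcard⟩))
  · exact Or.inr (Or.inr (Or.inr ⟨blockInvariants_one_two_three_cons hL, hcard⟩))

theorem isKStep_inter_Icc_four {n : ℕ} {Δ : Finset ℕ} (hsub : Δ ⊆ Icc 1 n) (h1 : 1 ∈ Δ) :
    IsKStep Δ (Δ ∩ Icc 4 n) := by
  set P := [1, 2, 3].filter (· ∈ Δ)
  have hP : P = [1] ∨ P = [1, 2] ∨ P = [1, 3] ∨ P = [1, 2, 3] := by
    by_cases h2 : 2 ∈ Δ <;> by_cases h3 : 3 ∈ Δ <;> simp [P, h1, h2, h3]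
  have hΓ : ∀ x ∈ Δ ∩ Icc 4 n, 4 ≤ x := fun x hx => (mem_Icc.1 (mem_inter.1 hx).2).1
  refine isKStep_of_sort_eq_append hP (sort_eq_append_sort ?_ ?_ ?_) hΓ
  · exact (by decide : [1, 2, 3].Pairwise (· < ·)).sublist List.filter_sublist
  · intro x hx y hy
    have := hΓ y hy
    replace hx := (List.mem_filter.1 hx).1
    simp only [List.mem_cons, List.not_mem_nil, or_false] at hx
    omega
  · intro x
    constructor
    · intro hx
      have := mem_Icc.1 (hsub hx)
      simp only [P, List.mem_filter, List.mem_cons, List.not_mem_nil, mem_inter, mem_Icc, or_false,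
        decide_eq_true_eq, hx, and_true, true_and]
      omega
    · rintro (hx | hx)
      · exact of_decide_eq_true (List.mem_filter.1 hx).2
      · exact (mem_inter.1 hx).1

theorem d_gamma3 {n : ℕ} (Δ : Finset ℕ) (hsub : Δ ⊆ Finset.Icc 1 n) (h1 : 1 ∈ Δ) :
    ∀ t, 1 ≤ t → dF Δ t ≤ dF (Δ ∩ Finset.Icc 4 n) t + 1 :=
  fun _ ht => (isKStep_inter_Icc_four hsub h1).dF_le ht
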